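/- Assume f(z) ≥ 0 for all z, the Restricted Strict Convexity Property with constants 0 < α ≤ β on A + A + A, and β ≤ 1/μ < (4/3)·α. Let x_opt ∈ A satisfy f(x_opt) ≤ f(z) for all z ∈ A, and set c := 4·(1 − μα), so 0 ≤ c < 1. Then the projected-gradient (IHT) iterates with x⁰ = 0 satisfy, for every n ≥ 0 and every x ∈ H, ‖x^n − x‖ ≤ c^{n/2}·‖x_opt‖ + 2·√(μ·f(x_opt)/(1 − c)) + ‖x − x_opt‖. -/

import Mathlib

/-!
Fix a step and put `z = xⁿ - (μ/2)∇f(xⁿ)`. The three points `xⁿ`, `xⁿ⁺¹`, `x_opt` lie in one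
subspace `T = A_i + A_j + A_k ⊆ A + A + A`, on which the RSCP holds. Since `xⁿ⁺¹ = P_A z` is at
least as close to `z` as `x_opt`, comparing with the orthogonal projection onto `T` gives
`‖xⁿ⁺¹ - x_opt‖ ≤ 2‖(xⁿ - x_opt) - (μ/2) P_T ∇f(xⁿ)‖`. The lower RSCP bound controls
`⟪∇f(xⁿ), xⁿ - x_opt⟫`, and the upper one, applied to a gradient step inside `T` and combined
with `f ≥ 0`, gives `‖P_T ∇f(xⁿ)‖² ≤ 4β f(xⁿ)`. With `μβ ≤ 1` this yields the recursion
`‖xⁿ⁺¹ - x_opt‖² ≤ c‖xⁿ - x_opt‖² + 4μ f(x_opt)`, which is unrolled from `x⁰ = 0`; the triangle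
inequality through `x_opt` finishes.
-/

open scoped InnerProductSpace Pointwise

section

variable {E : Type*} [NormedAddCommGroup E] [InnerProductSpace ℝ E]

def RestrictedStrictConvexity (f : E → ℝ) (gradf : E → E) (α β : ℝ) (S : Set E) : Prop :=
  ∀ x₁ x₂, x₁ - x₂ ∈ S →
    α * ‖x₁ - x₂‖ ^ 2 ≤ f x₁ - f x₂ - ⟪gradf x₂, x₁ - x₂⟫_ℝ ∧
      f x₁ - f x₂ - ⟪gradf x₂, x₁ - x₂⟫_ℝ ≤ β * ‖x₁ - x₂‖ ^ 2

theorem RestrictedStrictConvexity.mono {f : E → ℝ} {gradf : E → E} {α β : ℝ} {S S' : Set E}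
    (h : RestrictedStrictConvexity f gradf α β S) (hS : S' ⊆ S) :
    RestrictedStrictConvexity f gradf α β S' :=
  fun x₁ x₂ hx => h x₁ x₂ (hS hx)

theorem norm_sub_sq_le_two_inner_of_norm_sub_le {z p q : E} (h : ‖z - p‖ ≤ ‖z - q‖) :
    ‖p - q‖ ^ 2 ≤ 2 * ⟪z - q, p - q⟫_ℝ := by
  have hsq : ‖z - p‖ ^ 2 ≤ ‖z - q‖ ^ 2 := pow_le_pow_left₀ (norm_nonneg _) h 2
  have hexp : ‖z - p‖ ^ 2 = ‖z - q‖ ^ 2 - 2 * ⟪z - q, p - q⟫_ℝ + ‖p - q‖ ^ 2 := by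
    rw [show z - p = (z - q) - (p - q) by abel, norm_sub_sq_real]
  linarith

namespace Submodule

variable (T : Submodule ℝ E) [T.HasOrthogonalProjection]

theorem real_inner_starProjection_of_mem (u : E) {w : E} (hw : w ∈ T) :
    ⟪T.starProjection u, w⟫_ℝ = ⟪u, w⟫_ℝ := by
  rw [T.inner_starProjection_left_eq_right, T.starProjection_eq_self_iff.mpr hw]

theorem norm_sub_le_two_mul_norm_starProjection {z p q : E} (hp : p ∈ T) (hq : q ∈ T)
    (h : ‖z - p‖ ≤ ‖z - q‖) : ‖p - q‖ ≤ 2 * ‖T.starProjection (z - q)‖ := by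
  have hsq := norm_sub_sq_le_two_inner_of_norm_sub_le h
  rw [← T.real_inner_starProjection_of_mem _ (T.sub_mem hp hq)] at hsq
  have hCS := real_inner_le_norm (T.starProjection (z - q)) (p - q)
  nlinarith [norm_nonneg (p - q), norm_nonneg (T.starProjection (z - q))]

end Submodule

theorem Submodule.coe_sup_sup_subset_add_add {ι : Type*} {Asub : ι → Submodule ℝ E} {A : Set E}
    (hA : A = ⋃ i, (Asub i : Set E)) (i j k : ι) :
    ((Asub i ⊔ Asub j ⊔ Asub k : Submodule ℝ E) : Set E) ⊆ A + A + A := by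
  have hsub (l : ι) : (Asub l : Set E) ⊆ A :=
    hA ▸ Set.subset_iUnion (fun i => (Asub i : Set E)) l
  rw [Submodule.coe_sup, Submodule.coe_sup]
  exact Set.add_subset_add (Set.add_subset_add (hsub i) (hsub j)) (hsub k)

namespace RestrictedStrictConvexity

variable {f : E → ℝ} {gradf : E → E} {α β : ℝ} {T : Submodule ℝ E} [T.HasOrthogonalProjection]

theorem norm_starProjection_sq_le (hRSC : RestrictedStrictConvexity f gradf α β T)
    (hf : ∀ z, 0 ≤ f z) (hβ : 0 < β) (x : E) :
    ‖T.starProjection (gradf x)‖ ^ 2 ≤ 4 * β * f x := by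
  set v := T.starProjection (gradf x)
  set t := 1 / (2 * β) with ht_def
  have hv : ⟪gradf x, v⟫_ℝ = ‖v‖ ^ 2 := by
    rw [← real_inner_self_eq_norm_sq,
      T.real_inner_starProjection_of_mem _ (T.starProjection_apply_mem _)]
  have hstep : (x - t • v) - x = (-t) • v := by module
  have hupper := (hRSC (x - t • v) x (hstep ▸ T.smul_mem _ (T.starProjection_apply_mem _))).2
  rw [hstep, real_inner_smul_right, hv, norm_smul, mul_pow, Real.norm_eq_abs, sq_abs] at hupper
  have hdecrease : (t - β * t ^ 2) * ‖v‖ ^ 2 ≤ f x := by nlinarith [hf (x - t • v)]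
  have ht : t - β * t ^ 2 = (4 * β)⁻¹ := by rw [ht_def]; field_simp; ring
  rwa [ht, inv_mul_le_iff₀ (by positivity)] at hdecrease

theorem norm_sub_smul_starProjection_sq_le (hRSC : RestrictedStrictConvexity f gradf α β T)
    (hf : ∀ z, 0 ≤ f z) (hβ : 0 < β) {μ : ℝ} (hμ : 0 < μ) (hμβ : μ * β ≤ 1)
    {x y : E} (hx : x ∈ T) (hy : y ∈ T) :
    ‖(x - y) - (μ / 2) • T.starProjection (gradf x)‖ ^ 2 ≤
      (1 - μ * α) * ‖x - y‖ ^ 2 + μ * f y := by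
  set v := T.starProjection (gradf x)
  have hlower := (hRSC y x (T.sub_mem hy hx)).1
  rw [norm_sub_rev, show y - x = -(x - y) by abel, inner_neg_right] at hlower
  have hvu : ⟪x - y, v⟫_ℝ = ⟪gradf x, x - y⟫_ℝ := by
    rw [real_inner_comm, T.real_inner_starProjection_of_mem _ (T.sub_mem hx hy)]
  have hexp : ‖(x - y) - (μ / 2) • v‖ ^ 2 =
      ‖x - y‖ ^ 2 - μ * ⟪gradf x, x - y⟫_ℝ + μ ^ 2 / 4 * ‖v‖ ^ 2 := by
    rw [norm_sub_sq_real, real_inner_smul_right, hvu, norm_smul, mul_pow, Real.norm_eq_abs,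
      sq_abs]
    ring
  have hv : ‖v‖ ^ 2 ≤ 4 * β * f x := hRSC.norm_starProjection_sq_le hf hβ x
  have hμ2 : μ ^ 2 / 4 * ‖v‖ ^ 2 ≤ μ * f x := by
    have hfx := hf x
    calc μ ^ 2 / 4 * ‖v‖ ^ 2 ≤ μ ^ 2 / 4 * (4 * β * f x) := by gcongr
      _ = μ * (μ * β) * f x := by ring
      _ ≤ μ * 1 * f x := by gcongr
      _ = μ * f x := by ring
  nlinarith

theorem norm_sub_sq_le_of_projected_step (hRSC : RestrictedStrictConvexity f gradf α β T)
    (hf : ∀ z, 0 ≤ f z) (hβ : 0 < β) {μ : ℝ} (hμ : 0 < μ) (hμβ : μ * β ≤ 1)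
    {x x' y : E} (hx : x ∈ T) (hx' : x' ∈ T) (hy : y ∈ T)
    (hproj : ‖x - (μ / 2) • gradf x - x'‖ ≤ ‖x - (μ / 2) • gradf x - y‖) :
    ‖x' - y‖ ^ 2 ≤ 4 * (1 - μ * α) * ‖x - y‖ ^ 2 + 4 * μ * f y := by
  have hP : T.starProjection (x - (μ / 2) • gradf x - y) =
      (x - y) - (μ / 2) • T.starProjection (gradf x) := by
    rw [map_sub, map_sub, map_smul, T.starProjection_eq_self_iff.mpr hx,
      T.starProjection_eq_self_iff.mpr hy]
    abel
  have hx'y := T.norm_sub_le_two_mul_norm_starProjection hx' hy hproj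
  rw [hP] at hx'y
  calc ‖x' - y‖ ^ 2 ≤ (2 * ‖(x - y) - (μ / 2) • T.starProjection (gradf x)‖) ^ 2 := by gcongr
    _ = 4 * ‖(x - y) - (μ / 2) • T.starProjection (gradf x)‖ ^ 2 := by ring
    _ ≤ 4 * ((1 - μ * α) * ‖x - y‖ ^ 2 + μ * f y) := by
      gcongr
      exact hRSC.norm_sub_smul_starProjection_sq_le hf hβ hμ hμβ hx hy
    _ = 4 * (1 - μ * α) * ‖x - y‖ ^ 2 + 4 * μ * f y := by ring

theorem norm_sub_sq_le_of_projected_step_of_iUnion [FiniteDimensional ℝ E] {ι : Type*}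
    {Asub : ι → Submodule ℝ E} {A : Set E} (hA : A = ⋃ i, (Asub i : Set E))
    (hRSC : RestrictedStrictConvexity f gradf α β (A + A + A))
    (hf : ∀ z, 0 ≤ f z) (hβ : 0 < β) {μ : ℝ} (hμ : 0 < μ) (hμβ : μ * β ≤ 1)
    {x x' y : E} (hx : x ∈ A) (hx' : x' ∈ A) (hy : y ∈ A)
    (hproj : ‖x - (μ / 2) • gradf x - x'‖ ≤ ‖x - (μ / 2) • gradf x - y‖) :
    ‖x' - y‖ ^ 2 ≤ 4 * (1 - μ * α) * ‖x - y‖ ^ 2 + 4 * μ * f y := by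
  rw [hA] at hx hx' hy
  obtain ⟨i, hi⟩ := Set.mem_iUnion.1 hx'
  obtain ⟨j, hj⟩ := Set.mem_iUnion.1 hy
  obtain ⟨k, hk⟩ := Set.mem_iUnion.1 hx
  have hRSC' :
      RestrictedStrictConvexity f gradf α β (Asub i ⊔ Asub j ⊔ Asub k : Submodule ℝ E) :=
    hRSC.mono (Submodule.coe_sup_sup_subset_add_add hA i j k)
  exact hRSC'.norm_sub_sq_le_of_projected_step hf hβ hμ hμβ (Submodule.mem_sup_right hk)
    (Submodule.mem_sup_left (Submodule.mem_sup_left hi))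
    (Submodule.mem_sup_left (Submodule.mem_sup_right hj)) hproj

end RestrictedStrictConvexity

theorem le_pow_mul_add_div_of_le_mul_add {d : ℕ → ℝ} {c b : ℝ} (hc0 : 0 ≤ c) (hc1 : c < 1)
    (hb : 0 ≤ b) (h : ∀ n, d (n + 1) ≤ c * d n + b) (n : ℕ) :
    d n ≤ c ^ n * d 0 + b / (1 - c) := by
  have hc1' : 0 < 1 - c := sub_pos.2 hc1
  induction n with
  | zero => simpa using div_nonneg hb hc1'.le
  | succ n ih =>
    have hfix : c * (b / (1 - c)) + b = b / (1 - c) := by field_simp; ring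
    calc d (n + 1) ≤ c * d n + b := h n
      _ ≤ c * (c ^ n * d 0 + b / (1 - c)) + b := by gcongr
      _ = c ^ (n + 1) * d 0 + (c * (b / (1 - c)) + b) := by ring
      _ = c ^ (n + 1) * d 0 + b / (1 - c) := by rw [hfix]

theorem le_add_of_sq_le_sq_add_sq {x a b : ℝ} (ha : 0 ≤ a) (hb : 0 ≤ b)
    (h : x ^ 2 ≤ a ^ 2 + b ^ 2) : x ≤ a + b :=
  le_of_sq_le_sq (by nlinarith [mul_nonneg ha hb]) (add_nonneg ha hb)

theorem le_rpow_mul_add_two_mul_sqrt_of_sq_le {r a b c : ℝ} (n : ℕ) (hc0 : 0 ≤ c) (hc1 : c < 1)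
    (ha : 0 ≤ a) (hb : 0 ≤ b) (h : r ^ 2 ≤ c ^ n * a ^ 2 + 4 * b / (1 - c)) :
    r ≤ c ^ ((n : ℝ) / 2) * a + 2 * √(b / (1 - c)) := by
  have hpow : (c ^ ((n : ℝ) / 2)) ^ 2 = c ^ n := by
    rw [← Real.rpow_natCast, ← Real.rpow_mul hc0]; norm_num
  have hsqrt : (2 * √(b / (1 - c))) ^ 2 = 4 * b / (1 - c) := by
    rw [mul_pow, Real.sq_sqrt (div_nonneg hb (by linarith))]
    ring
  refine le_add_of_sq_le_sq_add_sq (by positivity) (by positivity) ?_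
  rwa [mul_pow, hpow, hsqrt]

end

theorem iht_nonlinear_objective_recovery_bound_general
    {N : ℕ} {ι : Type*}
    (Asub : ι → Submodule ℝ (EuclideanSpace ℝ (Fin N)))
    (A : Set (EuclideanSpace ℝ (Fin N))) (hA : A = ⋃ i, (Asub i : Set (EuclideanSpace ℝ (Fin N))))
    (f : EuclideanSpace ℝ (Fin N) → ℝ) (hf : ∀ z, 0 ≤ f z)
    (gradf : EuclideanSpace ℝ (Fin N) → EuclideanSpace ℝ (Fin N))
    (α β μ : ℝ) (hα : 0 < α) (hαβ : α ≤ β) (hμ : 0 < μ)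
    (hβμ : β ≤ 1 / μ) (hμα : 1 / μ < (4 / 3) * α)
    (hRSCP : ∀ x₁ x₂ : EuclideanSpace ℝ (Fin N), x₁ - x₂ ∈ A + A + A →
      α * ‖x₁ - x₂‖ ^ 2 ≤ f x₁ - f x₂ - ⟪gradf x₂, x₁ - x₂⟫_ℝ ∧
        f x₁ - f x₂ - ⟪gradf x₂, x₁ - x₂⟫_ℝ ≤ β * ‖x₁ - x₂‖ ^ 2)
    (PA : EuclideanSpace ℝ (Fin N) → EuclideanSpace ℝ (Fin N))
    (hPA : ∀ z, PA z ∈ A ∧ ∀ a ∈ A, ‖z - PA z‖ ≤ ‖z - a‖)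
    (xopt : EuclideanSpace ℝ (Fin N)) (hxoptA : xopt ∈ A)
    (xseq : ℕ → EuclideanSpace ℝ (Fin N)) (hx0 : xseq 0 = 0)
    (hxit : ∀ n, xseq (n + 1) = PA (xseq n - (μ / 2) • gradf (xseq n))) :
    ∀ (n : ℕ) (x : EuclideanSpace ℝ (Fin N)),
      ‖xseq n - x‖ ≤
        (4 * (1 - μ * α)) ^ ((n : ℝ) / 2) * ‖xopt‖ +
          2 * Real.sqrt (μ * f xopt / (1 - 4 * (1 - μ * α))) + ‖x - xopt‖ := by
  have hβ : 0 < β := hα.trans_le hαβ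
  have hμβ : μ * β ≤ 1 := by rwa [le_div_iff₀ hμ, mul_comm] at hβμ
  have hμα' : 1 < 4 / 3 * α * μ := by rwa [div_lt_iff₀ hμ] at hμα
  set c := 4 * (1 - μ * α)
  have hc0 : 0 ≤ c := by nlinarith
  have hc1 : c < 1 := by linarith
  have hxA : ∀ n, xseq n ∈ A
    | 0 => by
      obtain ⟨j, hj⟩ := Set.mem_iUnion.1 (hA ▸ hxoptA)
      exact hx0 ▸ hA ▸ Set.mem_iUnion.2 ⟨j, (Asub j).zero_mem⟩
    | n + 1 => hxit n ▸ (hPA _).1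
  have hstep (n : ℕ) :
      ‖xseq (n + 1) - xopt‖ ^ 2 ≤ c * ‖xseq n - xopt‖ ^ 2 + 4 * μ * f xopt :=
    RestrictedStrictConvexity.norm_sub_sq_le_of_projected_step_of_iUnion hA hRSCP hf hβ hμ hμβ
      (hxA n) (hxA (n + 1)) hxoptA (hxit n ▸ (hPA _).2 xopt hxoptA)
  have hrec := le_pow_mul_add_div_of_le_mul_add (d := fun n => ‖xseq n - xopt‖ ^ 2) hc0 hc1
    (mul_nonneg (by positivity) (hf xopt)) hstep
  intro n x
  have hdist := le_rpow_mul_add_two_mul_sqrt_of_sq_le n hc0 hc1 (norm_nonneg xopt)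
    (mul_nonneg hμ.le (hf xopt)) (by simpa [hx0, mul_assoc] using hrec n)
  calc ‖xseq n - x‖ ≤ ‖xseq n - xopt‖ + ‖xopt - x‖ := norm_sub_le_norm_sub_add_norm_sub _ _ _
    _ ≤ _ := by rw [norm_sub_rev xopt x]; linarith

/-- If `f ≥ 0` satisfies the Restricted Strict Convexity Property with
`0 < α ≤ β` on `A + A + A` (with `A` a union of subspaces), `β ≤ 1/μ < (4/3)α`, and `x_opt`
minimises `f` over `A`, then with `c := 4(1 − μα)` the projected-gradient iterates with
`x⁰ = 0` satisfy, for every `n` and every `x`,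
`‖x^n − x‖ ≤ c^{n/2}‖x_opt‖ + 2√(μf(x_opt)/(1 − c)) + ‖x − x_opt‖`. -/
theorem iht_nonlinear_objective_recovery_bound
    {N : ℕ} {ι : Type*} [Nonempty ι]
    (Asub : ι → Submodule ℝ (EuclideanSpace ℝ (Fin N)))
    (A : Set (EuclideanSpace ℝ (Fin N))) (hA : A = ⋃ i, (Asub i : Set (EuclideanSpace ℝ (Fin N))))
    (f : EuclideanSpace ℝ (Fin N) → ℝ) (hf : ∀ z, 0 ≤ f z)
    (gradf : EuclideanSpace ℝ (Fin N) → EuclideanSpace ℝ (Fin N))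
    (hgrad : ∀ u, HasGradientAt f (gradf u) u)
    (α β μ : ℝ) (hα : 0 < α) (hαβ : α ≤ β) (hμ : 0 < μ)
    (hβμ : β ≤ 1 / μ) (hμα : 1 / μ < (4 / 3) * α)
    (hRSCP : ∀ x₁ x₂ : EuclideanSpace ℝ (Fin N), x₁ - x₂ ∈ A + A + A →
      α * ‖x₁ - x₂‖ ^ 2 ≤ f x₁ - f x₂ - ⟪gradf x₂, x₁ - x₂⟫_ℝ ∧
        f x₁ - f x₂ - ⟪gradf x₂, x₁ - x₂⟫_ℝ ≤ β * ‖x₁ - x₂‖ ^ 2)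
    (PA : EuclideanSpace ℝ (Fin N) → EuclideanSpace ℝ (Fin N))
    (hPA : ∀ z, PA z ∈ A ∧ ∀ a ∈ A, ‖z - PA z‖ ≤ ‖z - a‖)
    (xopt : EuclideanSpace ℝ (Fin N)) (hxoptA : xopt ∈ A) (hxopt : ∀ z ∈ A, f xopt ≤ f z)
    (xseq : ℕ → EuclideanSpace ℝ (Fin N)) (hx0 : xseq 0 = 0)
    (hxit : ∀ n, xseq (n + 1) = PA (xseq n - (μ / 2) • gradf (xseq n))) :
    ∀ (n : ℕ) (x : EuclideanSpace ℝ (Fin N)),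
      ‖xseq n - x‖ ≤
        (4 * (1 - μ * α)) ^ ((n : ℝ) / 2) * ‖xopt‖ +
          2 * Real.sqrt (μ * f xopt / (1 - 4 * (1 - μ * α))) + ‖x - xopt‖ :=
  iht_nonlinear_objective_recovery_bound_general Asub A hA f hf gradf α β μ hα hαβ hμ hβμ hμα hRSCP
    PA hPA xopt hxoptA xseq hx0 hxit
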